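/- A commutative quasi-local ring (R, m) is Noetherian if and only if R satisfies (⋄) and m/m^2 is a finitely generated R-module. -/

import Mathlib

/-!
(⇒) Over a Noetherian local ring, every element of a module with essential simple socle is killed
by a power of `𝔪`, so a finitely generated submodule is a finite module over some Artinian ring
`R ⧸ 𝔪 ^ K`.

(⇐) Property (⋄) makes every ideal `𝔪`-adically closed: if `a ∉ J`, an ideal `P ⊇ J` maximal
with `a ∉ P` makes `R ⧸ P` a cyclic module with essential simple socle `R ∙ a`, which (⋄) forces
to be Artinian, so `𝔪 ^ n ⊆ P` for some `n`. Closedness and finiteness of `𝔪/𝔪²` make `𝔪` finitely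
generated. Given an ideal `J`, the ideal of its initial forms in the polynomial ring over the
residue field is finitely generated; lifting generators gives a finitely generated `J₀ ⊆ J` with
`J ⊆ J₀ + 𝔪ⁿ` for all `n`, hence `J = J₀` by closedness.
-/

universe u v

/-- Property (⋄): the injective hull of every simple `R`-module is locally Artinian. -/
def HasDiamond (R : Type u) [Ring R] : Prop :=
  ∀ (E : Type u) [AddCommGroup E] [Module R E], Module.Injective R E →
    (∃ S : Submodule R E, IsSimpleModule R S ∧ ∀ N : Submodule R E, N ≠ ⊥ → S ⊓ N ≠ ⊥) →
    ∀ N : Submodule R E, N.FG → IsArtinian R N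

section EssentialExtension

variable {R : Type u} [Ring R]

theorem Module.Injective.of_leftInverse {M Q : Type v} [AddCommGroup M] [Module R M]
    [AddCommGroup Q] [Module R Q] [Module.Injective R Q] (i : M →ₗ[R] Q) (ρ : Q →ₗ[R] M)
    (hρ : Function.LeftInverse ρ i) : Module.Injective R M where
  out _ _ _ _ _ _ f hf g := by
    obtain ⟨h, hh⟩ := Module.Injective.out f hf (i ∘ₗ g)
    exact ⟨ρ ∘ₗ h, fun x => by simp [hh, hρ _]⟩

variable {I : Type v} [AddCommGroup I] [Module R I]

def Submodule.IsEssentialExtension (M₀ W : Submodule R I) : Prop :=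
  M₀ ≤ W ∧ ∀ x ∈ W, x ≠ 0 → ∃ r : R, r • x ≠ 0 ∧ r • x ∈ M₀

namespace Submodule

theorem exists_maximal_isEssentialExtension (M₀ : Submodule R I) :
    ∃ E, Maximal (IsEssentialExtension M₀) E := by
  refine (zorn_le_nonempty₀ {W | IsEssentialExtension M₀ W} (fun c hc hchain W hW => ?_) M₀
    ⟨le_rfl, fun x hx hx0 => ⟨1, by simpa, by simpa⟩⟩).imp fun _ hE => hE.2
  refine ⟨sSup c, ⟨(hc hW).1.trans (le_sSup hW), fun x hx hx0 => ?_⟩, fun _ => le_sSup⟩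
  obtain ⟨W', hW', hxW'⟩ := (mem_sSup_of_directed ⟨W, hW⟩ hchain.directedOn).mp hx
  exact (hc hW').2 x hxW' hx0

theorem exists_maximal_disjoint (E : Submodule R I) : ∃ N, Maximal (Disjoint · E) N := by
  obtain ⟨N, hN⟩ := zorn_le₀ {N : Submodule R I | Disjoint N E} fun c hc hchain =>
    ⟨sSup c, hchain.directedOn.disjoint_sSup_left.2 fun _ hN => hc hN, fun _ => le_sSup⟩
  exact ⟨N, hN⟩

/-- For `N` maximal disjoint from `E`, extending the identity of `E` along `E ↪ I ⧸ N` gives an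
endomorphism of `I` fixing `E` and killing `N`; its range is an essential extension of `M₀`
containing `E`, hence is `E`, so `E` is a retract of `I`. -/
theorem injective_of_maximal_isEssentialExtension [Module.Injective R I] {M₀ E : Submodule R I}
    (hE : Maximal (IsEssentialExtension M₀) E) : Module.Injective R E := by
  obtain ⟨N, hN⟩ := exists_maximal_disjoint E
  have hinj : Function.Injective (N.mkQ ∘ₗ E.subtype) := by
    rw [← LinearMap.ker_eq_bot, LinearMap.ker_comp, ker_mkQ, ← disjoint_iff_comap_eq_bot]
    exact hN.1.symm
  obtain ⟨h, hh⟩ := Module.Injective.out (N.mkQ ∘ₗ E.subtype) hinj E.subtype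
  set ρ := h ∘ₗ N.mkQ
  have hρE : ∀ x ∈ E, ρ x = x := fun x hx => hh ⟨x, hx⟩
  have hρN : ∀ x ∈ N, ρ x = 0 := fun x hx => by
    simp [ρ, (Quotient.mk_eq_zero N).2 hx]
  have hE_le : E ≤ LinearMap.range ρ := fun x hx => ⟨x, hρE x hx⟩
  have hess : IsEssentialExtension M₀ (LinearMap.range ρ) := by
    refine ⟨hE.1.1.trans hE_le, ?_⟩
    rintro _ ⟨x, rfl⟩ hx0
    have hxN : x ∉ N := fun hx => hx0 (hρN x hx)
    have hnd : ¬ Disjoint (N ⊔ R ∙ x) E := fun hd =>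
      hxN (hN.2 hd le_sup_left (mem_sup_right (mem_span_singleton_self x)))
    obtain ⟨z, hz, hzE, hz0⟩ : ∃ z ∈ N ⊔ R ∙ x, z ∈ E ∧ z ≠ 0 := by
      simpa [disjoint_def] using hnd
    obtain ⟨n, hn, _, hy, rfl⟩ := mem_sup.mp hz
    obtain ⟨r, rfl⟩ := mem_span_singleton.mp hy
    have hrx : r • ρ x = n + r • x := by
      rw [← hρE _ hzE, map_add, hρN n hn, zero_add, map_smul]
    obtain ⟨r', hr'0, hr'M⟩ := hE.1.2 _ hzE hz0
    exact ⟨r' * r, by rwa [mul_smul, hrx], by rwa [mul_smul, hrx]⟩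
  have hrange : LinearMap.range ρ = E := le_antisymm (hE.2 hess hE_le) hE_le
  refine Module.Injective.of_leftInverse E.subtype
    (ρ.codRestrict E fun x => hrange ▸ LinearMap.mem_range_self ρ x) fun x => ?_
  exact Subtype.ext (hρE x x.2)

end Submodule

end EssentialExtension

theorem exists_embedding_into_injective {R : Type u} [Ring R] (M : Type u) [AddCommGroup M]
    [Module R M] : ∃ (I : Type u) (_ : AddCommGroup I) (_ : Module R I) (i : M →ₗ[R] I),
      Module.Injective R I ∧ Function.Injective i := by
  open CategoryTheory in
  let i := Injective.ι (ModuleCat.of R M)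
  exact ⟨_, _, _, i.hom,
    Module.injective_module_of_injective_object R _ (inj := Injective.injective_under _),
    (ModuleCat.mono_iff_injective i).mp inferInstance⟩

theorem Submodule.span_singleton_le_of_forall_mem_span_singleton {R M : Type*} [Ring R]
    [AddCommGroup M] [Module R M] {b : M} (hb : ∀ c : M, c ≠ 0 → b ∈ R ∙ c)
    {N : Submodule R M} (hN : N ≠ ⊥) : R ∙ b ≤ N := by
  obtain ⟨c, hcN, hc0⟩ := (Submodule.ne_bot_iff N).mp hN
  exact (span_singleton_le_iff_mem b N).mpr (span_singleton_le_iff_mem c N |>.mpr hcN (hb c hc0))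

/-- `M` embeds essentially into an injective hull of its essential simple socle `R ∙ b`, to which
(⋄) applies. -/
theorem HasDiamond.isArtinian {R : Type u} [Ring R] (hD : HasDiamond R) {M : Type u}
    [AddCommGroup M] [Module R M] [Module.Finite R M] {b : M} (hb0 : b ≠ 0)
    (hb : ∀ c : M, c ≠ 0 → b ∈ R ∙ c) : IsArtinian R M := by
  obtain ⟨I, _, _, i, hI, hi⟩ := exists_embedding_into_injective (R := R) M
  obtain ⟨E, hE⟩ := (LinearMap.range i).exists_maximal_isEssentialExtension
  have := Submodule.injective_of_maximal_isEssentialExtension hE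
  let j : M →ₗ[R] E := i.codRestrict E fun x => hE.1.1 ⟨x, rfl⟩
  have hj : Function.Injective j := fun x y hxy => hi (congrArg Subtype.val hxy)
  have hjb : ∀ x : E, x ≠ 0 → j b ∈ R ∙ x := by
    intro x hx
    obtain ⟨r, hr0, c, hc⟩ := hE.1.2 x x.2 (by simpa using hx)
    obtain ⟨s, rfl⟩ := Submodule.mem_span_singleton.mp
      (hb c fun hc0 => hr0 (by rw [← hc, hc0, map_zero]))
    refine Submodule.mem_span_singleton.mpr ⟨s * r, Subtype.ext ?_⟩
    simp [j, mul_smul, hc]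
  have hsimple : IsSimpleModule R (R ∙ j b) := by
    refine isSimpleModule_iff_isAtom.mpr ⟨by simpa using hj.ne hb0, fun N hN => ?_⟩
    by_contra hN0
    exact hN.not_ge (Submodule.span_singleton_le_of_forall_mem_span_singleton hjb hN0)
  have hart : IsArtinian R (LinearMap.range j) :=
    hD E this ⟨R ∙ j b, hsimple, fun N hN => by
      rw [inf_eq_left.mpr (Submodule.span_singleton_le_of_forall_mem_span_singleton hjb hN)]
      simpa using hj.ne hb0⟩ _ (Module.Finite.iff_fg.mp inferInstance)
  exact isArtinian_of_linearEquiv (LinearEquiv.ofInjective j hj).symm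

open IsLocalRing

theorem Ideal.exists_maximal_notMem {R : Type*} [CommRing R] {J : Ideal R} {a : R} (ha : a ∉ J) :
    ∃ P, J ≤ P ∧ Maximal (fun P : Ideal R => a ∉ P) P := by
  refine zorn_le_nonempty₀ {P : Ideal R | a ∉ P} (fun c hc hchain P hP => ?_) J ha
  refine ⟨sSup c, fun hac => ?_, fun _ => le_sSup⟩
  obtain ⟨Q, hQ, haQ⟩ := (Submodule.mem_sSup_of_directed ⟨P, hP⟩ hchain.directedOn).mp hac
  exact hc hQ haQ

theorem Ideal.Quotient.mk_mem_span_singleton_of_maximal_notMem {R : Type*} [CommRing R]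
    {P : Ideal R} {a : R} (hP : Maximal (fun P : Ideal R => a ∉ P) P) (c : R ⧸ P) (hc : c ≠ 0) :
    Ideal.Quotient.mk P a ∈ R ∙ c := by
  obtain ⟨x, rfl⟩ := Ideal.Quotient.mk_surjective c
  have hax : a ∈ Ideal.span {x} ⊔ P := by
    by_contra hax
    exact hc (Ideal.Quotient.eq_zero_iff_mem.mpr
      (hP.2 hax le_sup_right (Ideal.mem_sup_left (Ideal.mem_span_singleton_self x))))
  obtain ⟨r, p, hp, rfl⟩ := Ideal.mem_span_singleton_sup.mp hax
  refine Submodule.mem_span_singleton.mpr ⟨r, ?_⟩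
  simp [Ideal.Quotient.eq_zero_iff_mem.mpr hp, Algebra.smul_def]

theorem HasDiamond.iInf_sup_maximalIdeal_pow {R : Type u} [CommRing R] [IsLocalRing R]
    (hD : HasDiamond R) (J : Ideal R) : ⨅ n, (J ⊔ maximalIdeal R ^ n) = J := by
  refine le_antisymm (fun a ha => ?_) (le_iInf fun _ => le_sup_left)
  by_contra haJ
  obtain ⟨P, hJP, hP⟩ := Ideal.exists_maximal_notMem haJ
  have hart : IsArtinian R (R ⧸ P) := hD.isArtinian
    (fun h => hP.1 (Ideal.Quotient.eq_zero_iff_mem.mp h))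
    (Ideal.Quotient.mk_mem_span_singleton_of_maximal_notMem hP)
  have : IsArtinianRing (R ⧸ P) := isArtinian_of_tower R hart
  obtain ⟨n, hn⟩ := exists_maximalIdeal_pow_le_of_isArtinianRing_quotient P
  exact hP.1 (sup_le hJP hn (Submodule.mem_iInf _ |>.mp ha n))

theorem Submodule.exists_fg_sup_eq_top {R M : Type*} [Ring R] [AddCommGroup M] [Module R M]
    (K : Submodule R M) [Module.Finite R (M ⧸ K)] : ∃ N : Submodule R M, N.FG ∧ K ⊔ N = ⊤ := by
  obtain ⟨n, s, hs⟩ := Module.Finite.exists_fin (R := R) (M := M ⧸ K)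
  choose t ht using fun k => K.mkQ_surjective (s k)
  refine ⟨span R (Set.range t), fg_span (Set.finite_range t), (map_mkQ_eq_top K _).mp ?_⟩
  rwa [map_span, ← Set.range_comp, show K.mkQ ∘ t = s from funext ht]

namespace Ideal

variable {R : Type*} [CommRing R] {I : Ideal R}

theorem exists_fg_le_sup_sq [Module.Finite R (I ⧸ Submodule.comap I.subtype (I ^ 2))] :
    ∃ J ≤ I, J.FG ∧ I ≤ J ⊔ I ^ 2 := by
  obtain ⟨N, hN, htop⟩ := Submodule.exists_fg_sup_eq_top (Submodule.comap I.subtype (I ^ 2))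
  refine ⟨N.map I.subtype, Submodule.map_subtype_le _ _, hN.map _, ?_⟩
  have hI := congrArg (Submodule.map I.subtype) htop
  rw [Submodule.map_sup, Submodule.map_comap_subtype, Submodule.map_subtype_top] at hI
  exact hI.ge.trans (sup_le (inf_le_right.trans le_sup_right) le_sup_left)

theorem le_sup_pow_of_le_sup_sq {J : Ideal R} (h : I ≤ J ⊔ I ^ 2) (n : ℕ) : I ≤ J ⊔ I ^ n := by
  induction n with
  | zero => simp
  | succ n ih =>
    calc I ≤ J ⊔ I * I := by rwa [← sq]
      _ ≤ J ⊔ I * (J ⊔ I ^ n) := sup_le_sup_left (mul_mono_right ih) J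
      _ ≤ J ⊔ I ^ (n + 1) := by
        rw [mul_sup, ← sup_assoc, pow_succ']
        exact sup_le_sup_right (sup_le le_rfl mul_le_right) _

theorem fg_of_finite_cotangent (hclosed : ∀ J : Ideal R, ⨅ n, (J ⊔ I ^ n) = J)
    [Module.Finite R (I ⧸ Submodule.comap I.subtype (I ^ 2))] : I.FG := by
  obtain ⟨J, hJI, hJ, hIJ⟩ := exists_fg_le_sup_sq (I := I)
  have hIJ' : I ≤ J := hclosed J ▸ le_iInf (le_sup_pow_of_le_sup_sq hIJ)
  rwa [← le_antisymm hJI hIJ']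

end Ideal

namespace MvPolynomial

variable {R σ : Type*} [CommRing R]

theorem eval_mem_mul_pow_of_coeff_mem {v : σ → R} {I : Ideal R} {p : MvPolynomial σ R} {d : ℕ}
    (hp : p.IsHomogeneous d) (hI : ∀ α, p.coeff α ∈ I) :
    eval v p ∈ I * Ideal.span (Set.range v) ^ d := by
  rw [p.as_sum, map_sum]
  refine Ideal.sum_mem _ fun α hα => ?_
  have hα : α.degree = d := by
    by_contra h
    exact mem_support_iff.mp hα (hp.coeff_eq_zero h)
  rw [eval_monomial]
  exact Ideal.mul_mem_mul (hI α) ((Ideal.mem_span_pow_iff_exists_isHomogeneous v _).mpr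
    ⟨monomial α 1, isHomogeneous_monomial 1 hα, by simp [eval_monomial]⟩)

theorem homogeneousComponent_mem_span {F : Set (MvPolynomial σ R)}
    (hF : ∀ p ∈ F, ∃ n, p.IsHomogeneous n) {p : MvPolynomial σ R} (hp : p ∈ Ideal.span F)
    (d : ℕ) : homogeneousComponent d p ∈ Ideal.span F :=
  letI := gradedAlgebra (σ := σ) (R := R)
  homogeneousComponent_mem_of_mem (Ideal.homogeneous_span _ _ hF) hp d

end MvPolynomial

theorem Ideal.exists_finset_subset_span_image_eq {A B : Type*} [CommRing B] [IsNoetherianRing B]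
    (f : A → B) (H : Set A) :
    ∃ F : Finset A, ↑F ⊆ H ∧ Ideal.span (f '' H) = Ideal.span (f '' F) := by
  classical
  obtain ⟨T, hTH, hT⟩ :=
    (Submodule.fg_span_iff_fg_span_finset_subset (f '' H)).mp (IsNoetherian.noetherian (R := B) _)
  obtain ⟨F, hFH, rfl⟩ := Finset.subset_set_image_iff.mp hTH
  exact ⟨F, hFH, by rw [← Finset.coe_image]; exact hT⟩

open MvPolynomial in
theorem Ideal.exists_fg_le_forall_inf_pow_le {R σ : Type*} [CommRing R] [Finite σ] (v : σ → R)
    [IsNoetherianRing (R ⧸ Ideal.span (Set.range v))] (J : Ideal R) :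
    ∃ J₀ ≤ J, J₀.FG ∧ ∀ d, J ⊓ Ideal.span (Set.range v) ^ d ≤
      J₀ ⊔ J ⊓ Ideal.span (Set.range v) ^ (d + 1) := by
  set I := Ideal.span (Set.range v)
  set φ := MvPolynomial.map (σ := σ) (Ideal.Quotient.mk I)
  obtain ⟨F, hFH, hF⟩ := Ideal.exists_finset_subset_span_image_eq φ
    {g | (∃ n, g.IsHomogeneous n) ∧ eval v g ∈ J}
  set J₀ := (Ideal.span (F : Set (MvPolynomial σ R))).map (eval v)
  have hJ₀J : J₀ ≤ J := Ideal.map_le_iff_le_comap.mpr (Ideal.span_le.mpr fun g hg => (hFH hg).2)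
  refine ⟨J₀, hJ₀J, Ideal.FG.map (Submodule.fg_span F.finite_toSet) _, fun d x ⟨hxJ, hxd⟩ => ?_⟩
  obtain ⟨g, hg, rfl⟩ := (Ideal.mem_span_pow_iff_exists_isHomogeneous v x).mp hxd
  obtain ⟨G, hG, hGg⟩ : ∃ G ∈ Ideal.span (F : Set (MvPolynomial σ R)), φ G = φ g := by
    rw [← Ideal.mem_map_iff_of_surjective φ (map_surjective _ Ideal.Quotient.mk_surjective),
      Ideal.map_span, ← hF]
    exact Ideal.subset_span ⟨g, ⟨⟨d, hg⟩, hxJ⟩, rfl⟩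
  have hGd : eval v (homogeneousComponent d G) ∈ J₀ :=
    Ideal.mem_map_of_mem _ (homogeneousComponent_mem_span (fun p hp => (hFH hp).1) hG d)
  have hcoeff : ∀ α, (g - G).coeff α ∈ I := fun α => Ideal.Quotient.eq_zero_iff_mem.mp <| by
    rw [← coeff_map, map_sub, hGg, sub_self, coeff_zero]
  have hrest : eval v (homogeneousComponent d (g - G)) ∈ I ^ (d + 1) := by
    rw [pow_succ']
    refine eval_mem_mul_pow_of_coeff_mem (homogeneousComponent_isHomogeneous d _) fun α => ?_
    rw [coeff_homogeneousComponent]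
    split_ifs
    exacts [hcoeff α, zero_mem I]
  have hsplit : eval v g = eval v (homogeneousComponent d G) +
      eval v (homogeneousComponent d (g - G)) := by
    rw [← map_add, map_sub, homogeneousComponent_eq_self hg, add_sub_cancel]
  rw [hsplit] at hxJ ⊢
  exact Submodule.add_mem_sup hGd ⟨(J.add_mem_iff_right (hJ₀J hGd)).mp hxJ, hrest⟩

theorem isNoetherianRing_of_fg_of_iInf_sup_pow_eq {R : Type*} [CommRing R] {I : Ideal R}
    (hI : I.FG) [IsNoetherianRing (R ⧸ I)] (hclosed : ∀ J : Ideal R, ⨅ n, (J ⊔ I ^ n) = J) :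
    IsNoetherianRing R := by
  obtain ⟨n, v, rfl⟩ := Submodule.fg_iff_exists_fin_generating_family.mp hI
  refine isNoetherianRing_iff_ideal_fg R |>.mpr fun J => ?_
  obtain ⟨J₀, hJ₀J, hJ₀, hstep⟩ := Ideal.exists_fg_le_forall_inf_pow_le v J
  have hle : ∀ d, J ≤ J₀ ⊔ J ⊓ Ideal.span (Set.range v) ^ d := by
    intro d
    induction d with
    | zero => simp
    | succ d ih => exact ih.trans (sup_le le_sup_left (hstep d))
  have hJJ₀ : J ≤ J₀ :=
    hclosed J₀ ▸ le_iInf fun d => (hle d).trans (sup_le_sup_left inf_le_right _)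
  rwa [le_antisymm hJJ₀ hJ₀J]

section Noetherian

variable {R M : Type*} [CommRing R] [IsNoetherianRing R] [AddCommGroup M] [Module R M]
  {S : Submodule R M}

/-- The annihilators of `a ^ k • x` stabilize; a nonzero `a ^ n • x` would have a multiple in
`S`, which `a` kills, contradicting the stabilization. -/
theorem exists_pow_smul_eq_zero_of_essential (hS : ∀ N : Submodule R M, N ≠ ⊥ → S ⊓ N ≠ ⊥)
    {a : R} (ha : ∀ s ∈ S, a • s = 0) (x : M) : ∃ k, a ^ k • x = 0 := by
  let f : ℕ →o Ideal R := ⟨fun k => (R ∙ (a ^ k • x)).annihilator, fun k l hkl r hr => by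
    rw [Submodule.mem_annihilator_span_singleton] at hr ⊢
    rw [← Nat.sub_add_cancel hkl, pow_add, mul_smul, smul_comm, hr, smul_zero]⟩
  obtain ⟨n, hn⟩ := monotone_stabilizes_iff_noetherian.mpr (inferInstance : IsNoetherian R R) f
  refine ⟨n, by_contra fun hx => ?_⟩
  obtain ⟨_, ⟨hsS, hs⟩, hs0⟩ :=
    (Submodule.ne_bot_iff _).mp (hS _ (by rwa [Ne, Submodule.span_singleton_eq_bot]))
  obtain ⟨r, rfl⟩ := Submodule.mem_span_singleton.mp hs
  have hr : r ∈ f (n + 1) := by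
    change r ∈ (R ∙ _).annihilator
    rw [Submodule.mem_annihilator_span_singleton, pow_succ', mul_smul, smul_comm r a, ha _ hsS]
  rw [← hn (n + 1) n.le_succ] at hr
  exact hs0 ((Submodule.mem_annihilator_span_singleton _ _).mp hr)

theorem le_radical_annihilator_of_essential (hS : ∀ N : Submodule R M, N ≠ ⊥ → S ⊓ N ≠ ⊥)
    {I : Ideal R} (hI : ∀ a ∈ I, ∀ s ∈ S, a • s = 0) {N : Submodule R M} (hN : N.FG) :
    I ≤ N.annihilator.radical := by
  induction N, hN using Submodule.fg_induction with
  | singleton x =>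
    intro a ha
    obtain ⟨k, hk⟩ := exists_pow_smul_eq_zero_of_essential hS (hI a ha) x
    exact ⟨k, (Submodule.mem_annihilator_span_singleton _ _).mpr hk⟩
  | sup N₁ N₂ _ _ h₁ h₂ =>
    rw [Submodule.annihilator_sup, Ideal.radical_inf]
    exact le_inf h₁ h₂

end Noetherian

theorem isArtinian_of_le_annihilator {R M : Type*} [CommRing R] [AddCommGroup M] [Module R M]
    [Module.Finite R M] (I : Ideal R) [IsArtinianRing (R ⧸ I)] (h : I ≤ Module.annihilator R M) :
    IsArtinian R M := by
  have hI := (Module.isTorsionBySet_iff_subset_annihilator R M).mpr h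
  let _ := hI.module
  have : IsScalarTower R (R ⧸ I) M := hI.isScalarTower
  have : Module.Finite (R ⧸ I) M := Module.Finite.of_restrictScalars_finite R _ _
  exact isArtinian_of_surjective_algebraMap (R := R ⧸ I) Ideal.Quotient.mk_surjective

theorem IsLocalRing.isArtinianRing_quotient_maximalIdeal_pow {R : Type*} [CommRing R]
    [IsLocalRing R] [IsNoetherianRing R] (n : ℕ) :
    IsArtinianRing (R ⧸ maximalIdeal R ^ (n + 1)) := by
  refine quotient_artinian_of_mem_minimalPrimes_of_isLocalRing _ ?_
  rw [← Ideal.radical_minimalPrimes, Ideal.radical_pow _ n.succ_ne_zero,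
    (maximalIdeal.isMaximal R).isPrime.radical, Ideal.minimalPrimes_eq_subsingleton_self]
  rfl

theorem hasDiamond_of_isNoetherianRing {R : Type u} [CommRing R] [IsLocalRing R]
    [IsNoetherianRing R] : HasDiamond R := by
  rintro E _ _ - ⟨S, hS, hSess⟩ N hN
  have hmS : ∀ a ∈ maximalIdeal R, ∀ s ∈ S, a • s = 0 := by
    intro a ha s hs
    rw [← eq_maximalIdeal (IsSimpleModule.annihilator_isMaximal (R := R) (M := S)),
      Module.mem_annihilator] at ha
    exact congrArg Subtype.val (ha ⟨s, hs⟩)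
  obtain ⟨K, hK⟩ := Ideal.exists_pow_le_of_le_radical_of_fg
    (le_radical_annihilator_of_essential hSess hmS hN) (IsNoetherian.noetherian _)
  have := isArtinianRing_quotient_maximalIdeal_pow (R := R) K
  have := Module.Finite.iff_fg.mpr hN
  exact isArtinian_of_le_annihilator _ ((Ideal.pow_le_pow_right K.le_succ).trans hK)

open IsLocalRing in
/-- A commutative quasi-local ring `(R, 𝔪)` is Noetherian if and only if `R` satisfies
(⋄) and `𝔪/𝔪²` is a finitely generated `R`-module. -/
theorem noetherian_iff_diamond_and_cotangent_fg (R : Type u) [CommRing R]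
    [IsLocalRing R] :
    IsNoetherianRing R ↔
      HasDiamond R ∧
        Module.Finite R
          (↥(maximalIdeal R) ⧸
            (Submodule.comap (maximalIdeal R).subtype (maximalIdeal R ^ 2))) := by
  refine ⟨fun _ => ⟨hasDiamond_of_isNoetherianRing, inferInstance⟩, fun ⟨hD, _⟩ => ?_⟩
  have : IsNoetherianRing (R ⧸ maximalIdeal R) :=
    (inferInstance : IsNoetherianRing (ResidueField R))
  have hclosed := hD.iInf_sup_maximalIdeal_pow
  exact isNoetherianRing_of_fg_of_iInf_sup_pow_eq (Ideal.fg_of_finite_cotangent hclosed) hclosed
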